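/- arXiv:1409.7675 — 6 statements merged into one kernel-verified Lean document; each statement's English description precedes it below -/
import Mathlib

section
/- Let g be the probability mass function of a Poisson binomial distribution with N trials and success probabilities p_1,...,p_N in [0,1]. Then for every integer x with 1 ≤ x ≤ N-1, g(x)^2 ≥ g(x-1) * g(x+1) (i.e., the pmf is log-concave). -/
open Finset

/-- Poisson binomial pmf with success probabilities `p : Fin N → ℝ`. -/
def poissonBinomialPmf {N : ℕ} (p : Fin N → ℝ) (x : ℕ) : ℝ :=
  ∑ S ∈ Finset.powersetCard x (Finset.univ : Finset (Fin N)),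
    (∏ i ∈ S, p i) * ∏ i ∈ Sᶜ, (1 - p i)

/-!
The pmf is the coefficient sequence of `∏ i, (p i X + (1 - p i))`. We prove by induction on the
number of factors the stronger property that all `2 × 2` minors of the Toeplitz matrix `(a (i - j))`
of the coefficient sequence `a` are nonnegative. Unlike log-concavity, this property passes to the
product with a linear factor `p X + q` with `p, q ≥ 0`: the minor of the product expands into minors
of `a` weighted by `p², pq, q²`.
-/

open Polynomial

/-- Pólya frequency of order two; for `a ≥ 0` this is log-concavity without internal zeros. -/
def IsPF2 {R : Type*} [Mul R] [LE R] (a : ℕ → R) : Prop :=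
  ∀ ⦃i j : ℕ⦄, i ≤ j → a i * a (j + 2) ≤ a (i + 1) * a (j + 1)

namespace IsPF2

variable {R : Type*} [CommMonoid R] [Preorder R] {a : ℕ → R}

theorem mul_le_sq (h : IsPF2 a) (n : ℕ) : a n * a (n + 2) ≤ a (n + 1) ^ 2 := by
  simpa [sq] using h le_rfl

theorem mul_add_three_le_mul (h : IsPF2 a) {i j : ℕ} (hij : i ≤ j) :
    a i * a (j + 3) ≤ a (i + 2) * a (j + 1) := by
  obtain rfl | hlt := hij.eq_or_lt
  · simpa [mul_comm] using h (Nat.le_succ i)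
  · calc a i * a (j + 3) ≤ a (i + 1) * a (j + 2) := h (by omega)
      _ ≤ a (i + 2) * a (j + 1) := h hlt

end IsPF2

namespace Polynomial

section Semiring

variable {R : Type*} [Semiring R] (p q : R) (P : R[X])

theorem coeff_linear_mul_zero : ((C p * X + C q) * P).coeff 0 = q * P.coeff 0 := by
  simp [add_mul, mul_assoc]

theorem coeff_linear_mul_succ (n : ℕ) :
    ((C p * X + C q) * P).coeff (n + 1) = p * P.coeff n + q * P.coeff (n + 1) := by
  simp [add_mul, mul_assoc, coeff_X_mul]

end Semiring

variable {R : Type*} [CommRing R] [LinearOrder R] [IsStrictOrderedRing R] {p q : R} {P : R[X]}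

theorem coeff_linear_mul_nonneg (hp : 0 ≤ p) (hq : 0 ≤ q) (hP₀ : ∀ n, 0 ≤ P.coeff n) (n : ℕ) :
    0 ≤ ((C p * X + C q) * P).coeff n := by
  cases n with
  | zero => rw [coeff_linear_mul_zero]; exact mul_nonneg hq (hP₀ 0)
  | succ n =>
    rw [coeff_linear_mul_succ]
    exact add_nonneg (mul_nonneg hp (hP₀ n)) (mul_nonneg hq (hP₀ (n + 1)))

theorem isPF2_coeff_linear_mul (hp : 0 ≤ p) (hq : 0 ≤ q) (hP₀ : ∀ n, 0 ≤ P.coeff n)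
    (hP : IsPF2 P.coeff) : IsPF2 ((C p * X + C q) * P).coeff := by
  rintro (_ | i) j hij
  · simp only [coeff_linear_mul_zero, coeff_linear_mul_succ]
    nlinarith [mul_le_mul_of_nonneg_left (hP (Nat.zero_le j)) (mul_nonneg hq hq),
      mul_nonneg (mul_nonneg hp hp) (mul_nonneg (hP₀ 0) (hP₀ j)),
      mul_nonneg (mul_nonneg hp hq) (mul_nonneg (hP₀ 1) (hP₀ j))]
  · obtain ⟨j, rfl⟩ := Nat.exists_eq_add_of_le' (Nat.one_le_of_lt hij)
    have hij : i ≤ j := by omega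
    simp only [coeff_linear_mul_succ]
    nlinarith [mul_le_mul_of_nonneg_left (hP hij) (mul_nonneg hp hp),
      mul_le_mul_of_nonneg_left (hP (Nat.succ_le_succ hij)) (mul_nonneg hq hq),
      mul_le_mul_of_nonneg_left (hP.mul_add_three_le_mul hij) (mul_nonneg hp hq)]

theorem isPF2_coeff_prod_linear {ι : Type*} (s : Finset ι) {p q : ι → R} (hp : ∀ i, 0 ≤ p i)
    (hq : ∀ i, 0 ≤ q i) :
    (∀ n, 0 ≤ (∏ i ∈ s, (C (p i) * X + C (q i))).coeff n) ∧
      IsPF2 (∏ i ∈ s, (C (p i) * X + C (q i))).coeff := by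
  induction s using Finset.cons_induction with
  | empty =>
    refine ⟨fun n => ?_, fun i j _ => ?_⟩
    · rw [prod_empty, coeff_one]
      positivity
    · simp [coeff_one]
  | cons i s hi ih =>
    rw [prod_cons]
    exact ⟨coeff_linear_mul_nonneg (hp i) (hq i) ih.1,
      isPF2_coeff_linear_mul (hp i) (hq i) ih.1 ih.2⟩

end Polynomial

theorem poissonBinomialPmf_eq_coeff {N : ℕ} (p : Fin N → ℝ) (x : ℕ) :
    poissonBinomialPmf p x = (∏ i, (C (p i) * X + C (1 - p i))).coeff x := by
  simp_rw [poissonBinomialPmf, compl_eq_univ_sdiff, prod_add, finsetSum_coeff, prod_mul_distrib,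
    prod_const, ← map_prod, mul_right_comm _ (X ^ _), ← C_mul, coeff_C_mul_X_pow, @eq_comm _ x,
    ← sum_filter, ← powersetCard_eq_filter]

theorem poissonBinomial_log_concave_general {N : ℕ} (p : Fin N → ℝ)
    (hp : ∀ i, p i ∈ Set.Icc (0 : ℝ) 1) (x : ℕ) (hx1 : 1 ≤ x) :
    (poissonBinomialPmf p x) ^ 2 ≥
      poissonBinomialPmf p (x - 1) * poissonBinomialPmf p (x + 1) := by
  obtain ⟨n, rfl⟩ := Nat.exists_eq_add_of_le' hx1
  have hPF2 := (isPF2_coeff_prod_linear univ (fun i => (hp i).1)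
    (fun i => sub_nonneg.2 (hp i).2)).2
  simp only [poissonBinomialPmf_eq_coeff, Nat.add_sub_cancel]
  exact hPF2.mul_le_sq n

theorem poissonBinomial_log_concave {N : ℕ} (p : Fin N → ℝ)
    (hp : ∀ i, p i ∈ Set.Icc (0 : ℝ) 1) (x : ℕ) (hx1 : 1 ≤ x) (hx2 : x ≤ N - 1) :
    (poissonBinomialPmf p x) ^ 2 ≥
      poissonBinomialPmf p (x - 1) * poissonBinomialPmf p (x + 1) :=
  poissonBinomial_log_concave_general p hp x hx1
end

section
/- Let g be the pmf of a Poisson binomial distribution with N trials and success probabilities p_1,...,p_N strictly between 0 and 1. Then for every integer x with 1 ≤ x ≤ N-1, g(x)^2 > C(x) · g(x+1) · g(x-1), where C(x) = max((x+1)/x, (N-x+1)/(N-x)). -/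
/-!
Write `g(k) = ∑_{|S| = k} w(S)` with `w(S) = ∏_{i ∈ S} p_i ∏_{i ∉ S} (1 - p_i)`. The product
`w(C) w(D)` depends only on `I = C ∩ D` and `U = C ∪ D`, and for `|I| + |U| = k + j` exactly
`C(|U| - |I|, k - |I|)` pairs `(C, D)` with `|C| = k`, `|D| = j` produce a given `(I, U)`.
Hence `g(x)²` and `g(x+1) g(x-1)` are combinations of the same positive weights `W(I, U)`, with
coefficients `C(2m, m)` and `C(2m, m+1)` where `m = x - |I| ≤ min(x, N - x) =: M`. Termwise
`(M + 1) C(2m, m+1) ≤ M C(2m, m)`, strictly at `I = U`, and `max((x+1)/x, (N-x+1)/(N-x))` is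
`(M + 1) / M`.
-/

open Finset

theorem Nat.add_one_mul_choose_two_mul_add_one_le {m M : ℕ} (h : m ≤ M) :
    (M + 1) * (2 * m).choose (m + 1) ≤ M * (2 * m).choose m := by
  have hchoose : (2 * m).choose (m + 1) * (m + 1) = (2 * m).choose m * m := by
    rw [Nat.choose_succ_right_eq, show 2 * m - m = m by omega]
  refine Nat.le_of_mul_le_mul_right ?_ m.succ_pos
  calc (M + 1) * (2 * m).choose (m + 1) * (m + 1) = (2 * m).choose m * ((M + 1) * m) := by
        rw [mul_assoc, hchoose]; ring
    _ ≤ (2 * m).choose m * (M * (m + 1)) := Nat.mul_le_mul_left _ (by nlinarith)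
    _ = M * (2 * m).choose m * (m + 1) := by ring

theorem max_add_one_div_self_eq {K : Type*} [Field K] [LinearOrder K] [IsStrictOrderedRing K]
    {a b : K} (ha : 0 < a) (hb : 0 < b) :
    max ((a + 1) / a) ((b + 1) / b) = (min a b + 1) / min a b := by
  rcases le_total a b with h | h
  · rw [min_eq_left h, max_eq_left]
    rw [div_le_div_iff₀ hb ha]; nlinarith
  · rw [min_eq_right h, max_eq_right]
    rw [div_le_div_iff₀ ha hb]; nlinarith

variable {ι : Type*} [Fintype ι] [DecidableEq ι]

theorem card_filter_inter_union_eq {I U : Finset ι} {k j : ℕ} (hIU : I ⊆ U)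
    (hcard : #I + #U = k + j) (hIk : #I ≤ k) :
    #{CD ∈ powersetCard k univ ×ˢ powersetCard j univ | (CD.1 ∩ CD.2, CD.1 ∪ CD.2) = (I, U)} =
      (#U - #I).choose (k - #I) := by
  rw [← card_sdiff_of_subset hIU, ← card_powersetCard]
  refine card_nbij' (fun CD => CD.1 \ CD.2) (fun A => (I ∪ A, U \ A)) ?_ ?_ ?_ ?_
  · rintro ⟨C, D⟩ hCD
    simp only [mem_coe, mem_filter, mem_product, mem_powersetCard, Prod.mk.injEq] at hCD
    obtain ⟨⟨⟨-, hC⟩, -, -⟩, rfl, rfl⟩ := hCD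
    refine mem_powersetCard.2 ⟨sdiff_subset_sdiff subset_union_left inter_subset_right, ?_⟩
    dsimp only
    rw [card_sdiff, inter_comm, hC]
  · intro A hA
    obtain ⟨hAUI, hA⟩ := mem_powersetCard.1 hA
    obtain ⟨hAU, hAI⟩ := subset_sdiff.1 hAUI
    have := card_le_card hIU
    have := card_le_card hAU
    simp only [mem_coe, mem_filter, mem_product, mem_powersetCard, Prod.mk.injEq,
      subset_univ, true_and, card_union_of_disjoint hAI.symm, card_sdiff_of_subset hAU]
    refine ⟨⟨by omega, by omega⟩, ?_, ?_⟩ <;> ext i <;> grind [disjoint_left]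
  · rintro ⟨C, D⟩ hCD
    simp only [mem_coe, mem_filter, Prod.mk.injEq] at hCD
    obtain ⟨-, rfl, rfl⟩ := hCD
    ext i <;> grind
  · intro A hA
    obtain ⟨hAU, hAI⟩ := subset_sdiff.1 (mem_powersetCard.1 hA).1
    ext i; grind [disjoint_left]

def nestedPairs (s : ℕ) : Finset (Finset ι × Finset ι) :=
  {IU | IU.1 ⊆ IU.2 ∧ #IU.1 + #IU.2 = s}

section CommSemiring

variable {R : Type*} [CommSemiring R] (a b : ι → R)

def subsetWeight (S : Finset ι) : R := (∏ i ∈ S, a i) * ∏ i ∈ Sᶜ, b i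

def subsetWeightSum (k : ℕ) : R := ∑ S ∈ powersetCard k univ, subsetWeight a b S

def pairWeight (I U : Finset ι) : R :=
  ∏ i, if i ∈ I then a i * a i else if i ∈ U then a i * b i else b i * b i

theorem subsetWeight_eq_prod_piecewise (S : Finset ι) :
    subsetWeight a b S = ∏ i, S.piecewise a b i := by
  rw [prod_piecewise, univ_inter, ← compl_eq_univ_sdiff, subsetWeight]

theorem subsetWeight_mul_subsetWeight (C D : Finset ι) :
    subsetWeight a b C * subsetWeight a b D = pairWeight a b (C ∩ D) (C ∪ D) := by
  rw [subsetWeight_eq_prod_piecewise, subsetWeight_eq_prod_piecewise, ← prod_mul_distrib]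
  refine prod_congr rfl fun i _ => ?_
  by_cases hC : i ∈ C <;> by_cases hD : i ∈ D <;> simp [hC, hD, mul_comm]

theorem subsetWeightSum_mul_subsetWeightSum {k j : ℕ} (hjk : j ≤ k) :
    subsetWeightSum a b k * subsetWeightSum a b j =
      ∑ IU ∈ nestedPairs (k + j),
        ((#IU.2 - #IU.1).choose (k - #IU.1) : R) * pairWeight a b IU.1 IU.2 := by
  have hmaps : ∀ CD ∈ powersetCard k univ ×ˢ powersetCard j univ,
      (CD.1 ∩ CD.2, CD.1 ∪ CD.2) ∈ nestedPairs (ι := ι) (k + j) := by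
    rintro ⟨C, D⟩ hCD
    simp only [mem_product, mem_powersetCard] at hCD
    simp [nestedPairs, inter_subset_union, card_inter_add_card_union, hCD.1.2, hCD.2.2]
  rw [subsetWeightSum, subsetWeightSum, sum_mul_sum, ← sum_product',
    ← sum_fiberwise_of_maps_to hmaps]
  refine sum_congr rfl fun ⟨I, U⟩ hIU => ?_
  simp only [nestedPairs, mem_filter, mem_univ, true_and] at hIU
  have hIk : #I ≤ k := by have := card_le_card hIU.1; omega
  rw [sum_congr rfl (g := fun _ => pairWeight a b I U) ?_, sum_const,
    card_filter_inter_union_eq hIU.1 hIU.2 hIk, nsmul_eq_mul]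
  rintro ⟨C, D⟩ hCD
  simp only [mem_filter, Prod.mk.injEq] at hCD
  rw [subsetWeight_mul_subsetWeight, hCD.2.1, hCD.2.2]

end CommSemiring

section OrderedSemiring

variable {R : Type*} [CommSemiring R] [PartialOrder R] [IsStrictOrderedRing R] {a b : ι → R}

theorem pairWeight_pos (ha : ∀ i, 0 < a i) (hb : ∀ i, 0 < b i) (I U : Finset ι) :
    0 < pairWeight a b I U :=
  prod_pos fun i _ => by have := ha i; have := hb i; split_ifs <;> positivity

theorem add_one_mul_subsetWeightSum_lt (ha : ∀ i, 0 < a i) (hb : ∀ i, 0 < b i) {x : ℕ}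
    (hx : 1 ≤ x) (hxn : x < Fintype.card ι) :
    ((min x (Fintype.card ι - x) + 1 : ℕ) : R) *
        (subsetWeightSum a b (x + 1) * subsetWeightSum a b (x - 1)) <
      (min x (Fintype.card ι - x) : ℕ) * (subsetWeightSum a b x * subsetWeightSum a b x) := by
  set M := min x (Fintype.card ι - x)
  rw [subsetWeightSum_mul_subsetWeightSum a b (by omega : x - 1 ≤ x + 1),
    subsetWeightSum_mul_subsetWeightSum a b le_rfl, show x + 1 + (x - 1) = x + x by omega,
    mul_sum, mul_sum]
  obtain ⟨I₀, -, hI₀⟩ :=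
    exists_subset_card_eq (show x ≤ #(univ : Finset ι) by rw [card_univ]; omega)
  refine sum_lt_sum (fun ⟨I, U⟩ hIU => ?_) ⟨(I₀, I₀), ?_, ?_⟩
  · simp only [nestedPairs, mem_filter, mem_univ, true_and] at hIU
    have hIU_card := card_le_card hIU.1
    have hU : #U ≤ Fintype.card ι := card_le_univ U
    have hm : x - #I ≤ M := by omega
    rw [← mul_assoc, ← mul_assoc, show #U - #I = 2 * (x - #I) by omega,
      show x + 1 - #I = x - #I + 1 by omega]
    refine mul_le_mul_of_nonneg_right ?_ (pairWeight_pos ha hb I U).le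
    exact_mod_cast Nat.add_one_mul_choose_two_mul_add_one_le hm
  · simp [nestedPairs, hI₀]
  · have hM : 0 < M := by omega
    simpa [hI₀] using mul_pos (Nat.cast_pos.2 hM) (pairWeight_pos ha hb I₀ I₀)

end OrderedSemiring

theorem poissonBinomialPmf_eq_subsetWeightSum {N : ℕ} (p : Fin N → ℝ) :
    poissonBinomialPmf p = subsetWeightSum p (fun i => 1 - p i) :=
  rfl

/-- Theorem 2 of Wang (1993): strengthened log-concavity of the Poisson binomial pmf. -/
theorem poissonBinomial_wang_ineq {N : ℕ} (p : Fin N → ℝ)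
    (hp : ∀ i, p i ∈ Set.Ioo (0 : ℝ) 1) (x : ℕ) (hx1 : 1 ≤ x) (hx2 : x ≤ N - 1) :
    (poissonBinomialPmf p x) ^ 2 >
      max ((x + 1 : ℝ) / x) ((N - x + 1 : ℝ) / (N - x)) *
        poissonBinomialPmf p (x + 1) * poissonBinomialPmf p (x - 1) := by
  have key := add_one_mul_subsetWeightSum_lt (R := ℝ) (a := p) (b := fun i => 1 - p i)
    (fun i => (hp i).1) (fun i => sub_pos.2 (hp i).2) hx1 (by rw [Fintype.card_fin]; omega)
  have hxN : (x : ℝ) < N := by exact_mod_cast (show x < N by omega)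
  have hmax : max ((x + 1 : ℝ) / x) ((N - x + 1 : ℝ) / (N - x)) =
      ((min x (N - x) : ℕ) + 1 : ℝ) / (min x (N - x) : ℕ) := by
    rw [max_add_one_div_self_eq (by positivity) (by linarith), Nat.cast_min,
      Nat.cast_sub (by omega)]
  have hM : (0 : ℝ) < (min x (N - x) : ℕ) := by exact_mod_cast (show 0 < min x (N - x) by omega)
  rw [Fintype.card_fin, ← poissonBinomialPmf_eq_subsetWeightSum, Nat.cast_add_one] at key
  rw [gt_iff_lt, hmax, div_mul_eq_mul_div, div_mul_eq_mul_div, div_lt_iff₀ hM]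
  linarith
end

section
/- Let g be a log-concave pmf on {0,...,N} (i.e., g(x)^2 ≥ g(x-1)g(x+1) for 1 ≤ x ≤ N-1) with g(x) > 0 for all x, and let π ∈ [0,1]. Define f(x) = π·g(x-1) + (1-π)·g(x) (with g(-1) = 0). Then the ratio x ↦ g(x-1)/f(x) is nondecreasing on {1,...,N}. -/
section OrderedField

variable {K : Type*} [Field K] [LinearOrder K] [IsStrictOrderedRing K] {a b c t : K}

lemma convex_comb_pos (ha : 0 < a) (hb : 0 < b) (ht₀ : 0 ≤ t) (ht₁ : t ≤ 1) :
    0 < t * a + (1 - t) * b := by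
  rcases ht₁.lt_or_eq with ht | rfl
  · have : 0 < (1 - t) * b := mul_pos (sub_pos.2 ht) hb
    nlinarith
  · simpa using ha

/-- Cross-multiplied, the two sides differ by `(1 - t) * (b ^ 2 - a * c)`. -/
lemma div_convex_comb_le_div_convex_comb_of_mul_le_sq (ha : 0 < a) (hb : 0 < b) (hc : 0 < c)
    (ht₀ : 0 ≤ t) (ht₁ : t ≤ 1) (h : a * c ≤ b ^ 2) :
    a / (t * a + (1 - t) * b) ≤ b / (t * b + (1 - t) * c) := by
  rw [div_le_div_iff₀ (convex_comb_pos ha hb ht₀ ht₁) (convex_comb_pos hb hc ht₀ ht₁)]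
  linear_combination mul_le_mul_of_nonneg_left h (sub_nonneg.2 ht₁)

end OrderedField

/-- Monotone likelihood ratio after adding one Bernoulli(π) trial to a positive
log-concave pmf `g` on `{0,...,N}` (Lemma 1 of the paper, case `|A| = 1`). -/
theorem ratio_monotone_of_log_concave (N : ℕ) (g : ℕ → ℝ)
    (hpos : ∀ x ≤ N, 0 < g x)
    (hlc : ∀ x, 1 ≤ x → x ≤ N - 1 → g (x - 1) * g (x + 1) ≤ (g x) ^ 2)
    (π : ℝ) (hπ : π ∈ Set.Icc (0 : ℝ) 1)
    (f : ℕ → ℝ) (hf : ∀ x, f x = π * (if x = 0 then 0 else g (x - 1)) + (1 - π) * g x) :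
    ∀ x, 1 ≤ x → x + 1 ≤ N → g (x - 1) / f x ≤ g x / f (x + 1) := by
  intro x hx hxN
  have hfx : f x = π * g (x - 1) + (1 - π) * g x := by
    rw [hf, if_neg (by omega)]
  have hfx₁ : f (x + 1) = π * g x + (1 - π) * g (x + 1) := by
    rw [hf, if_neg x.succ_ne_zero, Nat.add_sub_cancel]
  rw [hfx, hfx₁]
  exact div_convex_comb_le_div_convex_comb_of_mul_le_sq (hpos _ (by omega)) (hpos _ (by omega))
    (hpos _ hxN) hπ.1 hπ.2 (hlc x hx (by omega))
end

section
/- Let f_N(·; π_1,...,π_N) denote the Poisson binomial pmf, and for a subset A ⊆ {1,...,N} let f̂_N(x; π_1,...,π_N, A) be the Poisson binomial pmf where π_i is replaced by 1 for i ∈ A. If all π_i ∈ (0,1), then for any nonempty A, the likelihood ratio λ^A(x) = f̂_N(x; π_1,...,π_N, A) / f_N(x; π_1,...,π_N) is nondecreasing in x on {0,1,...,N}. -/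
open Finset

/-- Poisson binomial pmf where `p i` is replaced by `1` for `i ∈ A`. -/
noncomputable def poissonBinomialPmfHat {N : ℕ} (p : Fin N → ℝ) (A : Finset (Fin N))
    (x : ℕ) : ℝ :=
  poissonBinomialPmf (fun i => if i ∈ A then 1 else p i) x

/-! Write `P_s` for the Poisson binomial pmf of the trials in `s`. Forcing the trials of `A`
to succeed shifts the pmf of the other trials `t = Aᶜ` by `#A`, so the claim is that
`y ↦ P_t(y) / P_{A ∪ t}(#A + y)` is nondecreasing. Moving one trial `j` from `t` into `A`
multiplies this ratio by `P_t(y) / P_{insert j t}(y + 1)`, which is nondecreasing because `P_t`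
is log-concave; log-concavity in turn survives adding a trial, since
`P_{insert j t}(x + 1) = p_j P_t(x) + (1 - p_j) P_t(x + 1)`. -/

section LogConcave

lemma mul_le_mul_shift_of_logConcave {h : ℕ → ℝ} {m : ℕ} (hpos : ∀ x ≤ m, 0 < h x)
    (hzero : ∀ x, m < x → h x = 0) (hlc : ∀ x, h x * h (x + 2) ≤ h (x + 1) ^ 2) (y : ℕ) :
    h y * h (y + 3) ≤ h (y + 1) * h (y + 2) := by
  have hnn : ∀ x, 0 ≤ h x := fun x => by
    rcases le_or_gt x m with hx | hx
    · exact (hpos x hx).le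
    · exact (hzero x hx).ge
  by_cases hy : y + 2 ≤ m
  · have hmid := mul_pos (hpos (y + 1) (by omega)) (hpos (y + 2) hy)
    refine le_of_mul_le_mul_right ?_ hmid
    calc h y * h (y + 3) * (h (y + 1) * h (y + 2))
        = (h y * h (y + 2)) * (h (y + 1) * h (y + 3)) := by ring
      _ ≤ h (y + 1) ^ 2 * h (y + 2) ^ 2 :=
          mul_le_mul (hlc y) (hlc (y + 1)) (mul_nonneg (hnn _) (hnn _)) (sq_nonneg _)
      _ = h (y + 1) * h (y + 2) * (h (y + 1) * h (y + 2)) := by ring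
  · rw [hzero (y + 3) (by omega), mul_zero]
    exact mul_nonneg (hnn _) (hnn _)

variable {G H : ℕ → ℝ} {a : ℝ}

lemma mul_le_mul_of_bernoulli_conv (ha : a ≤ 1) (hlc : ∀ x, G x * G (x + 2) ≤ G (x + 1) ^ 2)
    (hH : ∀ z, H (z + 1) = a * G z + (1 - a) * G (z + 1)) (y : ℕ) :
    G y * H (y + 2) ≤ G (y + 1) * H (y + 1) := by
  rw [hH, hH]
  nlinarith [mul_le_mul_of_nonneg_left (hlc y) (sub_nonneg.2 ha)]

lemma logConcave_of_bernoulli_conv (ha : a ∈ Set.Icc 0 1) (hnn : ∀ x, 0 ≤ G x)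
    (hlc : ∀ x, G x * G (x + 2) ≤ G (x + 1) ^ 2)
    (hshift : ∀ y, G y * G (y + 3) ≤ G (y + 1) * G (y + 2))
    (hH0 : H 0 = (1 - a) * G 0) (hH : ∀ z, H (z + 1) = a * G z + (1 - a) * G (z + 1)) (x : ℕ) :
    H x * H (x + 2) ≤ H (x + 1) ^ 2 := by
  obtain ⟨ha0, ha1⟩ := ha
  have hab : 0 ≤ a * (1 - a) := mul_nonneg ha0 (sub_nonneg.2 ha1)
  cases x with
  | zero =>
    rw [hH0, hH, hH]
    nlinarith [mul_le_mul_of_nonneg_left (hlc 0) (sq_nonneg (1 - a)),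
      mul_nonneg hab (mul_nonneg (hnn 0) (hnn 1)),
      mul_nonneg (sq_nonneg a) (mul_nonneg (hnn 0) (hnn 0))]
  | succ y =>
    rw [hH, hH, hH]
    nlinarith [mul_le_mul_of_nonneg_left (hlc y) (sq_nonneg a),
      mul_le_mul_of_nonneg_left (hlc (y + 1)) (sq_nonneg (1 - a)),
      mul_le_mul_of_nonneg_left (hshift y) hab]

end LogConcave

lemma cross_mul_le_trans {a a' b b' c c' : ℝ} (ha' : 0 ≤ a') (hc' : 0 ≤ c') (hb' : 0 < b')
    (hab : a * b' ≤ a' * b) (hbc : b * c' ≤ b' * c) : a * c' ≤ a' * c := by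
  refine le_of_mul_le_mul_right ?_ hb'
  nlinarith [mul_le_mul_of_nonneg_right hab hc', mul_le_mul_of_nonneg_left hbc ha']

section PoissonBinomialOn

variable {ι : Type*} [DecidableEq ι] {p : ι → ℝ} {s t A : Finset ι}

def poissonBinomialOn (p : ι → ℝ) (s : Finset ι) (x : ℕ) : ℝ :=
  ∑ S ∈ s.powersetCard x, (∏ i ∈ S, p i) * ∏ i ∈ s \ S, (1 - p i)

lemma poissonBinomialPmf_eq_poissonBinomialOn {N : ℕ} (p : Fin N → ℝ) (x : ℕ) :
    poissonBinomialPmf p x = poissonBinomialOn p univ x := by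
  simp only [poissonBinomialPmf, poissonBinomialOn, compl_eq_univ_sdiff]

lemma poissonBinomialOn_zero (p : ι → ℝ) (s : Finset ι) :
    poissonBinomialOn p s 0 = ∏ i ∈ s, (1 - p i) := by
  simp [poissonBinomialOn]

lemma poissonBinomialOn_of_card_lt {x : ℕ} (h : #s < x) : poissonBinomialOn p s x = 0 := by
  simp [poissonBinomialOn, powersetCard_eq_empty.2 h]

lemma poissonBinomialOn_nonneg (hp : ∀ i ∈ s, p i ∈ Set.Icc 0 1) (x : ℕ) :
    0 ≤ poissonBinomialOn p s x := by
  refine sum_nonneg fun S hS =>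
    mul_nonneg (prod_nonneg fun i hi => ?_) (prod_nonneg fun i hi => ?_)
  · exact (hp i ((mem_powersetCard.1 hS).1 hi)).1
  · exact sub_nonneg.2 (hp i (mem_sdiff.1 hi).1).2

lemma poissonBinomialOn_pos (hp : ∀ i ∈ s, p i ∈ Set.Ioo 0 1) {x : ℕ} (hx : x ≤ #s) :
    0 < poissonBinomialOn p s x := by
  refine sum_pos (fun S hS => mul_pos (prod_pos fun i hi => ?_) (prod_pos fun i hi => ?_))
    (powersetCard_nonempty.2 hx)
  · exact (hp i ((mem_powersetCard.1 hS).1 hi)).1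
  · exact sub_pos.2 (hp i (mem_sdiff.1 hi).1).2

lemma poissonBinomialOn_congr {q : ι → ℝ} (h : ∀ i ∈ s, p i = q i) (x : ℕ) :
    poissonBinomialOn p s x = poissonBinomialOn q s x := by
  refine sum_congr rfl fun S hS => ?_
  have hSs := (mem_powersetCard.1 hS).1
  rw [prod_congr rfl fun i hi => h i (hSs hi),
    prod_congr rfl fun i hi => congrArg (1 - ·) (h i (mem_sdiff.1 hi).1)]

variable {j : ι}

lemma poissonBinomialOn_insert_zero (hj : j ∉ s) :
    poissonBinomialOn p (insert j s) 0 = (1 - p j) * poissonBinomialOn p s 0 := by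
  rw [poissonBinomialOn_zero, poissonBinomialOn_zero, prod_insert hj]

lemma poissonBinomialOn_insert_succ (hj : j ∉ s) (x : ℕ) :
    poissonBinomialOn p (insert j s) (x + 1) =
      p j * poissonBinomialOn p s x + (1 - p j) * poissonBinomialOn p s (x + 1) := by
  have hjS : ∀ S ∈ s.powersetCard x, j ∉ S := fun S hS h => hj ((mem_powersetCard.1 hS).1 h)
  rw [poissonBinomialOn, powersetCard_succ_insert hj, sum_union, sum_image, add_comm,
    poissonBinomialOn, poissonBinomialOn, mul_sum, mul_sum]
  · congr 1
    · refine sum_congr rfl fun S hS => ?_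
      rw [prod_insert (hjS S hS), insert_sdiff_insert, sdiff_insert_of_notMem hj]
      ring
    · refine sum_congr rfl fun S hS => ?_
      rw [insert_sdiff_of_notMem _ fun h => hj ((mem_powersetCard.1 hS).1 h),
        prod_insert fun h => hj (mem_sdiff.1 h).1]
      ring
  · intro S hS T hT hST
    rw [← erase_insert (hjS S hS), ← erase_insert (hjS T hT), hST]
  · refine disjoint_left.2 fun S hS hS' => ?_
    obtain ⟨T, -, rfl⟩ := mem_image.1 hS'
    exact hj ((mem_powersetCard.1 hS).1 (mem_insert_self j T))

lemma poissonBinomialOn_eq_zero_of_lt_card (hA : ∀ i ∈ A, p i = 1) (hAs : A ⊆ s) {x : ℕ}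
    (hx : x < #A) : poissonBinomialOn p s x = 0 := by
  refine sum_eq_zero fun S hS => ?_
  obtain ⟨hSs, hcard⟩ := mem_powersetCard.1 hS
  obtain ⟨i, hiA, hiS⟩ := not_subset.1 fun h => (card_le_card h).not_gt (hcard ▸ hx)
  exact mul_eq_zero_of_right _
    (prod_eq_zero (mem_sdiff.2 ⟨hAs hiA, hiS⟩) (by rw [hA i hiA, sub_self]))

lemma poissonBinomialOn_union_card_add (hA : ∀ i ∈ A, p i = 1) (hd : Disjoint A t) (y : ℕ) :
    poissonBinomialOn p (A ∪ t) (#A + y) = poissonBinomialOn p t y := by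
  induction A using Finset.induction_on with
  | empty => simp
  | @insert j A hjA ih =>
    obtain ⟨hjt, hd⟩ := disjoint_insert_left.1 hd
    rw [insert_union, card_insert_of_notMem hjA, add_right_comm,
      poissonBinomialOn_insert_succ (fun h => (mem_union.1 h).elim hjA hjt),
      hA j (mem_insert_self j A), sub_self, zero_mul, add_zero, one_mul,
      ih (fun i hi => hA i (mem_insert_of_mem hi)) hd]

lemma poissonBinomialOn_logConcave (hp : ∀ i ∈ s, p i ∈ Set.Ioo 0 1) (x : ℕ) :
    poissonBinomialOn p s x * poissonBinomialOn p s (x + 2) ≤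
      poissonBinomialOn p s (x + 1) ^ 2 := by
  induction s using Finset.induction_on generalizing x with
  | empty =>
    rw [poissonBinomialOn_of_card_lt (s := ∅) (x := x + 1) (by simp),
      poissonBinomialOn_of_card_lt (s := ∅) (x := x + 2) (by simp)]
    simp
  | @insert j t hjt ih =>
    have hpt : ∀ i ∈ t, p i ∈ Set.Ioo 0 1 := fun i hi => hp i (mem_insert_of_mem hi)
    have hpt' : ∀ i ∈ t, p i ∈ Set.Icc 0 1 := fun i hi => Set.Ioo_subset_Icc_self (hpt i hi)
    exact logConcave_of_bernoulli_conv (Set.Ioo_subset_Icc_self (hp j (mem_insert_self j t)))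
      (poissonBinomialOn_nonneg hpt') (ih hpt)
      (mul_le_mul_shift_of_logConcave (fun _ => poissonBinomialOn_pos hpt)
        (fun _ => poissonBinomialOn_of_card_lt) (ih hpt))
      (poissonBinomialOn_insert_zero hjt) (poissonBinomialOn_insert_succ hjt) x

lemma poissonBinomialOn_mul_union_le (hp : ∀ i ∈ A ∪ t, p i ∈ Set.Ioo 0 1) (hd : Disjoint A t)
    (y : ℕ) :
    poissonBinomialOn p t y * poissonBinomialOn p (A ∪ t) (#A + y + 1) ≤
      poissonBinomialOn p t (y + 1) * poissonBinomialOn p (A ∪ t) (#A + y) := by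
  induction A using Finset.induction_on generalizing t y with
  | empty => simp [mul_comm]
  | @insert j A hjA ih =>
    obtain ⟨hjt, hd⟩ := disjoint_insert_left.1 hd
    have hdj : Disjoint A (insert j t) := disjoint_insert_right.2 ⟨hjA, hd⟩
    rw [insert_union, ← union_insert] at hp ⊢
    rw [card_insert_of_notMem hjA]
    have hpjt : ∀ i ∈ insert j t, p i ∈ Set.Ioo 0 1 := fun i hi => hp i (mem_union_right _ hi)
    have hpt : ∀ i ∈ t, p i ∈ Set.Ioo 0 1 := fun i hi => hpjt i (mem_insert_of_mem hi)
    have hGnn := poissonBinomialOn_nonneg fun i hi => Set.Ioo_subset_Icc_self (hpt i hi)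
    have hFnn := poissonBinomialOn_nonneg fun i hi => Set.Ioo_subset_Icc_self (hp i hi)
    rcases lt_or_ge #t (y + 1) with hy | hy
    · rw [poissonBinomialOn_of_card_lt (s := A ∪ insert j t), mul_zero]
      · exact mul_nonneg (hGnn _) (hFnn _)
      · rw [card_union_of_disjoint hdj, card_insert_of_notMem hjt]
        omega
    · have hH := poissonBinomialOn_pos hpjt (x := y + 2) (by rw [card_insert_of_notMem hjt]; omega)
      refine cross_mul_le_trans (hGnn _) (hFnn _) hH
        (mul_le_mul_of_bernoulli_conv (hp j (by simp)).2.le (poissonBinomialOn_logConcave hpt)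
          (poissonBinomialOn_insert_succ hjt) y) ?_
      convert ih hp hdj (y + 1) using 3 <;> ring

end PoissonBinomialOn

theorem likelihood_ratio_monotone_general {N : ℕ} (p : Fin N → ℝ)
    (hp : ∀ i, p i ∈ Set.Ioo (0 : ℝ) 1) (A : Finset (Fin N)) :
    ∀ x, x + 1 ≤ N →
      poissonBinomialPmfHat p A x / poissonBinomialPmf p x ≤
        poissonBinomialPmfHat p A (x + 1) / poissonBinomialPmf p (x + 1) := by
  intro x hx
  set q : Fin N → ℝ := fun i => if i ∈ A then 1 else p i
  have hq1 : ∀ i ∈ A, q i = 1 := fun i hi => if_pos hi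
  have hpos : ∀ z ≤ N, 0 < poissonBinomialOn p univ z := fun z hz =>
    poissonBinomialOn_pos (fun i _ => hp i) (by rwa [card_univ, Fintype.card_fin])
  simp only [poissonBinomialPmfHat, poissonBinomialPmf_eq_poissonBinomialOn]
  rw [div_le_div_iff₀ (hpos x (by omega)) (hpos (x + 1) hx)]
  rcases lt_or_ge x #A with hxA | hxA
  · rw [poissonBinomialOn_eq_zero_of_lt_card hq1 (subset_univ A) hxA, zero_mul]
    refine mul_nonneg (poissonBinomialOn_nonneg (fun i _ => ?_) _) (hpos x (by omega)).le
    by_cases hi : i ∈ A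
    · simp [hi]
    · simpa [q, hi] using Set.Ioo_subset_Icc_self (hp i)
  · obtain ⟨y, rfl⟩ := Nat.exists_eq_add_of_le hxA
    have hhat : ∀ z, poissonBinomialOn q (A ∪ Aᶜ) (#A + z) = poissonBinomialOn p Aᶜ z :=
      fun z => by
        rw [poissonBinomialOn_union_card_add hq1 disjoint_compl_right,
          poissonBinomialOn_congr fun i hi => if_neg (mem_compl.1 hi)]
    rw [← union_compl A, add_assoc, hhat, hhat, ← add_assoc]
    exact poissonBinomialOn_mul_union_le (fun i _ => hp i) disjoint_compl_right y

/-- Lemma 1 of the paper: the likelihood ratio `λ^A` is nondecreasing in `x`. -/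
theorem likelihood_ratio_monotone {N : ℕ} (p : Fin N → ℝ)
    (hp : ∀ i, p i ∈ Set.Ioo (0 : ℝ) 1) (A : Finset (Fin N)) (hA : A.Nonempty) :
    ∀ x, x + 1 ≤ N →
      poissonBinomialPmfHat p A x / poissonBinomialPmf p x ≤
        poissonBinomialPmfHat p A (x + 1) / poissonBinomialPmf p (x + 1) :=
  likelihood_ratio_monotone_general p hp A
end

section
/- (Neyman–Pearson sufficiency, discrete case) Let f₀ and f₁ be pmfs on a finite set X, let k ≥ 0, and let R ⊆ X satisfy: f₁(x) > k·f₀(x) for all x ∈ R, and f₁(x) < k·f₀(x) for all x ∉ R. Set α = Σ_{x∈R} f₀(x). Then for any test region R' with Σ_{x∈R'} f₀(x) ≤ α, we have Σ_{x∈R'} f₁(x) ≤ Σ_{x∈R} f₁(x); i.e., R is a most powerful level-α test of f₀ versus f₁. -/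
/-!
Write `g = f₁ - k f₀`. The region `R` is exactly where `g` is positive, so no region collects
more of `g` than `R` does: `P₁(R') - k P₀(R') ≤ P₁(R) - k P₀(R)`. Since `k ≥ 0` and
`P₀(R') ≤ P₀(R)`, the power of `R'` is at most that of `R`.
-/

open Finset

namespace Finset

variable {ι M : Type*} [AddCommMonoid M] [Preorder M] [AddLeftMono M]

theorem sum_le_sum_of_nonneg_on_of_nonpos_off {g : ι → M} {s : Finset ι}
    (hs : ∀ i ∈ s, 0 ≤ g i) (hsc : ∀ i ∉ s, g i ≤ 0) (t : Finset ι) :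
    ∑ i ∈ t, g i ≤ ∑ i ∈ s, g i := by
  classical
  calc ∑ i ∈ t, g i
      ≤ ∑ i ∈ t ∩ s, g i :=
        sum_le_sum_of_subset_of_nonpos' inter_subset_left
          fun i hit hi ↦ hsc i fun his ↦ hi (mem_inter.2 ⟨hit, his⟩)
    _ ≤ ∑ i ∈ s, g i :=
        sum_le_sum_of_subset_of_nonneg inter_subset_right fun i hi _ ↦ hs i hi

end Finset

theorem sum_sub_mul_sum_le_of_likelihoodRatio {X : Type*} {f₀ f₁ : X → ℝ} {k : ℝ}
    {R : Finset X} (hR : ∀ x ∈ R, k * f₀ x ≤ f₁ x) (hRc : ∀ x ∉ R, f₁ x ≤ k * f₀ x)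
    (R' : Finset X) :
    ∑ x ∈ R', f₁ x - k * ∑ x ∈ R', f₀ x ≤ ∑ x ∈ R, f₁ x - k * ∑ x ∈ R, f₀ x := by
  simp only [mul_sum, ← sum_sub_distrib]
  exact sum_le_sum_of_nonneg_on_of_nonpos_off
    (fun x hx ↦ sub_nonneg.2 (hR x hx)) (fun x hx ↦ sub_nonpos.2 (hRc x hx)) R'

theorem neyman_pearson_sufficiency_general {X : Type*}
    (f₀ f₁ : X → ℝ)
    (k : ℝ) (hk : 0 ≤ k) (R : Finset X)
    (hR : ∀ x ∈ R, f₁ x > k * f₀ x)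
    (hRc : ∀ x ∉ R, f₁ x < k * f₀ x) :
    ∀ R' : Finset X, (∑ x ∈ R', f₀ x) ≤ ∑ x ∈ R, f₀ x →
      (∑ x ∈ R', f₁ x) ≤ ∑ x ∈ R, f₁ x := by
  intro R' hlevel
  have hgain := sum_sub_mul_sum_le_of_likelihoodRatio
    (fun x hx ↦ (hR x hx).le) (fun x hx ↦ (hRc x hx).le) R'
  have hsize := mul_le_mul_of_nonneg_left hlevel hk
  linarith

/-- Neyman–Pearson sufficiency, discrete case: a likelihood-ratio region is a
most powerful test at its own level. -/
theorem neyman_pearson_sufficiency {X : Type*} [Fintype X] [DecidableEq X]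
    (f₀ f₁ : X → ℝ)
    (h₀nonneg : ∀ x, 0 ≤ f₀ x) (h₀pmf : ∑ x, f₀ x = 1)
    (h₁nonneg : ∀ x, 0 ≤ f₁ x) (h₁pmf : ∑ x, f₁ x = 1)
    (k : ℝ) (hk : 0 ≤ k) (R : Finset X)
    (hR : ∀ x ∈ R, f₁ x > k * f₀ x)
    (hRc : ∀ x ∉ R, f₁ x < k * f₀ x) :
    ∀ R' : Finset X, (∑ x ∈ R', f₀ x) ≤ ∑ x ∈ R, f₀ x →
      (∑ x ∈ R', f₁ x) ≤ ∑ x ∈ R, f₁ x :=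
  neyman_pearson_sufficiency_general f₀ f₁ k hk R hR hRc
end

section
/- (Benjamini–Hochberg FDR control under independence) Let p_1 ≤ p_2 ≤ ... ≤ p_m be the ordered p-values of m hypotheses, of which m₀ are true nulls with independent p-values uniformly distributed on [0,1]. Let k = max{ i : p_i ≤ (i/m)·q } (k = 0 if no such i), and reject the hypotheses corresponding to p_1,...,p_k. Then the expected false discovery proportion satisfies E[V / max(R,1)] ≤ (m₀/m)·q ≤ q, where V is the number of true nulls rejected and R = k is the total number rejected. -/
open MeasureTheory ProbabilityTheory Finset
open scoped Classical

/-- Number of rejections of the Benjamini–Hochberg step-up procedure at level `q`: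
the largest `k` such that at least `k` of the p-values are `≤ k·q/m`
(equivalently, the largest `k` with `p_(k) ≤ (k/m)·q` for the ordered p-values). -/
noncomputable def bhNumRejections (m : ℕ) (q : ℝ) (pv : Fin m → ℝ) : ℕ :=
  ((Finset.range (m + 1)).filter
    (fun k : ℕ => k ≤ ((Finset.univ : Finset (Fin m)).filter
      (fun i => pv i ≤ (k : ℝ) * q / m)).card)).sup id

/-!
For a true null `i`, let `Rᵢ` be the number of rejections after `pᵢ` is replaced by `0`.
Lowering a p-value that lies below the threshold `k q / m` leaves every count at thresholds
`≥ k q / m` unchanged, so the step-up procedure rejects `i` iff `pᵢ ≤ Rᵢ q / m`, and then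
`R = Rᵢ`. Thus `V / max(R, 1) = ∑_{i true null} 1{pᵢ ≤ Rᵢ q / m} / Rᵢ`. As `Rᵢ` depends only
on the other p-values, it is independent of the uniform `pᵢ`; integrating out `pᵢ` first bounds
each summand's expectation by `E[(Rᵢ q / m) / Rᵢ] ≤ q / m`.
-/

section StepUp

variable {m : ℕ} {q : ℝ}

lemma bhNumRejections_le_and_le_card (pv : Fin m → ℝ) :
    bhNumRejections m q pv ≤ m ∧
      bhNumRejections m q pv ≤ #{i | pv i ≤ (bhNumRejections m q pv : ℝ) * q / m} := by
  have hne : ((range (m + 1)).filter fun k : ℕ => k ≤ #{i | pv i ≤ (k : ℝ) * q / m}).Nonempty :=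
    ⟨0, by simp⟩
  obtain ⟨k, hk, hR⟩ := exists_mem_eq_sup _ hne id
  rw [bhNumRejections, hR]
  simpa [Nat.lt_succ_iff] using hk

lemma le_bhNumRejections {pv : Fin m → ℝ} {k : ℕ} (hkm : k ≤ m)
    (hk : k ≤ #{i | pv i ≤ (k : ℝ) * q / m}) : k ≤ bhNumRejections m q pv :=
  le_sup (f := id) (mem_filter.2 ⟨mem_range.2 (Nat.lt_succ_of_le hkm), hk⟩)

lemma bhNumRejections_eq_of_card_eq {u v : Fin m → ℝ} {r : ℕ}
    (huv : ∀ k : ℕ, r ≤ k → #{i | u i ≤ (k : ℝ) * q / m} = #{i | v i ≤ (k : ℝ) * q / m})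
    (hu : bhNumRejections m q u = r) : bhNumRejections m q v = r := by
  obtain ⟨hum, hu_card⟩ := bhNumRejections_le_and_le_card (q := q) u
  obtain ⟨hvm, hv_card⟩ := bhNumRejections_le_and_le_card (q := q) v
  subst hu
  refine le_antisymm ?_ (le_bhNumRejections hum (hu_card.trans_eq (huv _ le_rfl)))
  by_contra! hlt
  exact hlt.not_ge (le_bhNumRejections hvm (hv_card.trans_eq (huv _ hlt.le).symm))

lemma card_filter_update_zero_le {pv : Fin m → ℝ} {i : Fin m} {c : ℝ} (hc : 0 ≤ c)
    (hi : pv i ≤ c) :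
    #{j | Function.update pv i 0 j ≤ c} = #{j | pv j ≤ c} := by
  congr 1
  ext j
  rcases eq_or_ne j i with rfl | hji <;> simp [*]

lemma bhNumRejections_update_zero_eq_iff (hq : 0 ≤ q) {pv : Fin m → ℝ} {i : Fin m} {r : ℕ}
    (hi : pv i ≤ (r : ℝ) * q / m) :
    bhNumRejections m q (Function.update pv i 0) = r ↔ bhNumRejections m q pv = r := by
  have hcard (k : ℕ) (hk : r ≤ k) :
      #{j | Function.update pv i 0 j ≤ (k : ℝ) * q / m} = #{j | pv j ≤ (k : ℝ) * q / m} :=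
    card_filter_update_zero_le (by positivity) (hi.trans (by gcongr))
  exact ⟨bhNumRejections_eq_of_card_eq hcard,
    bhNumRejections_eq_of_card_eq fun k hk => (hcard k hk).symm⟩

lemma one_le_bhNumRejections (hq : 0 ≤ q) {pv : Fin m → ℝ} {i : Fin m}
    (hi : pv i ≤ (bhNumRejections m q pv : ℝ) * q / m) : 1 ≤ bhNumRejections m q pv := by
  by_contra! h0
  rw [Nat.lt_one_iff.1 h0, Nat.cast_zero, zero_mul, zero_div] at hi
  refine h0.not_ge (le_bhNumRejections i.pos (card_pos.2 ⟨i, ?_⟩))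
  simpa using hi.trans (by positivity)

lemma ite_div_max_bhNumRejections_eq (hq : 0 ≤ q) (pv : Fin m → ℝ) (i : Fin m) :
    (if pv i ≤ (bhNumRejections m q pv : ℝ) * q / m then (1 : ℝ) else 0) /
        max (bhNumRejections m q pv : ℝ) 1 =
      (if pv i ≤ (bhNumRejections m q (Function.update pv i 0) : ℝ) * (q / m) then (1 : ℝ)
        else 0) / bhNumRejections m q (Function.update pv i 0) := by
  simp only [← mul_div_assoc]
  by_cases h : pv i ≤ (bhNumRejections m q pv : ℝ) * q / m
  · rw [(bhNumRejections_update_zero_eq_iff hq h).2 rfl, if_pos h,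
      max_eq_left (by exact_mod_cast one_le_bhNumRejections hq h)]
  · have h' : ¬ pv i ≤ (bhNumRejections m q (Function.update pv i 0) : ℝ) * q / m :=
      fun h' => h ((bhNumRejections_update_zero_eq_iff hq h').1 rfl ▸ h')
    rw [if_neg h, if_neg h', zero_div, zero_div]

lemma card_filter_div_max_bhNumRejections_eq_sum (hq : 0 ≤ q) (pv : Fin m → ℝ)
    (T : Finset (Fin m)) :
    (#{i ∈ T | pv i ≤ (bhNumRejections m q pv : ℝ) * q / m} : ℝ) /
        max (bhNumRejections m q pv : ℝ) 1 =
      ∑ i ∈ T, (if pv i ≤ (bhNumRejections m q (Function.update pv i 0) : ℝ) * (q / m)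
        then (1 : ℝ) else 0) / bhNumRejections m q (Function.update pv i 0) := by
  rw [card_filter, Nat.cast_sum, sum_div]
  push_cast
  exact sum_congr rfl fun i _ => ite_div_max_bhNumRejections_eq hq pv i

lemma measurable_bhNumRejections : Measurable (bhNumRejections m q) := by
  have hcard (k : ℕ) : Measurable fun pv : Fin m → ℝ => #{i | pv i ≤ (k : ℝ) * q / m} := by
    simp_rw [card_filter]
    exact Finset.measurable_sum _ fun i _ =>
      Measurable.ite (measurableSet_le (measurable_pi_apply i) measurable_const)
        measurable_const measurable_const
  have hsup : bhNumRejections m q = fun pv => (range (m + 1)).sup' nonempty_range_add_one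
      fun k => if k ≤ #{i | pv i ≤ (k : ℝ) * q / m} then k else 0 := by
    funext pv
    rw [sup'_eq_sup, sup_ite, ← bot_eq_zero', sup_bot, sup_bot_eq]
    rfl
  rw [hsup]
  exact Finset.measurable_range_sup'' fun k _ =>
    Measurable.ite (measurableSet_le measurable_const (hcard k)) measurable_const measurable_const

end StepUp

namespace ProbabilityTheory

variable {Ω : Type*} {mΩ : MeasurableSpace Ω} {μ : Measure Ω}

lemma IndepFun.indepFun_prodMk_right {α β γ : Type*} [IsFiniteMeasure μ] [MeasurableSpace α]
    [MeasurableSpace β] [MeasurableSpace γ] {X : Ω → α} {Y : Ω → β} {Z : Ω → γ}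
    (hX : Measurable X) (hY : Measurable Y) (hZ : Measurable Z)
    (hXY : IndepFun X Y μ) (hXYZ : IndepFun (fun ω => (X ω, Y ω)) Z μ) :
    IndepFun X (fun ω => (Y ω, Z ω)) μ := by
  have hYZ : IndepFun Y Z μ := hXYZ.comp measurable_snd measurable_id
  rw [indepFun_iff_map_prod_eq_prod_map_map hX.aemeasurable (hY.prodMk hZ).aemeasurable,
    hYZ.map_prod_eq_prod_map_map hY.aemeasurable hZ.aemeasurable,
    ← Measure.prodAssoc_prod, ← hXY.map_prod_eq_prod_map_map hX.aemeasurable hY.aemeasurable,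
    ← hXYZ.map_prod_eq_prod_map_map (hX.prodMk hY).aemeasurable hZ.aemeasurable,
    Measure.map_map MeasurableEquiv.prodAssoc.measurable ((hX.prodMk hY).prodMk hZ)]
  rfl

lemma indepFun_update_of_iIndepFun {ι β : Type*} [DecidableEq ι] [MeasurableSpace β]
    [IsFiniteMeasure μ]
    {X : ι → Ω → β} (hX : ∀ i, Measurable (X i)) {T : Finset ι}
    (hT : iIndepFun (fun i : T => X i) μ)
    (hTc : IndepFun (fun ω (i : T) => X i ω) (fun ω (j : {j // j ∉ T}) => X j ω) μ)
    {i : ι} (hi : i ∈ T) (b : β) :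
    IndepFun (X i) (fun ω => Function.update (fun j => X j ω) i b) μ := by
  set ti : T := ⟨i, hi⟩
  set S : Finset T := univ.erase ti
  have hXY : IndepFun (X i) (fun ω (t : S) => X t ω) μ :=
    (hT.indepFun_finset {ti} S (by simp [S]) fun t => hX t).comp
      (measurable_pi_apply (⟨ti, mem_singleton_self ti⟩ : ({ti} : Finset T))) measurable_id
  have hXYZ :
      IndepFun (fun ω => (X i ω, fun t : S => X t ω)) (fun ω (j : {j // j ∉ T}) => X j ω) μ :=
    hTc.comp (φ := fun v => (v ti, fun t : S => v t)) (by fun_prop) measurable_id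
  let merge : (S → β) × ({j // j ∉ T} → β) → ι → β := fun p j =>
    if h : j ∈ T then (if h' : (⟨j, h⟩ : T) = ti then b else p.1 ⟨⟨j, h⟩, by simpa [S] using h'⟩)
    else p.2 ⟨j, h⟩
  have hmerge : Measurable merge := by
    refine measurable_pi_lambda _ fun j => ?_
    by_cases h : j ∈ T
    · by_cases h' : (⟨j, h⟩ : T) = ti <;> simp only [merge, h, h', dite_true, dite_false] <;>
        fun_prop
    · simp only [merge, h, dite_false]; fun_prop
  have hW : (fun ω => Function.update (fun j => X j ω) i b) =
      merge ∘ fun ω => (fun t : S => X t ω, fun j : {j // j ∉ T} => X j ω) := by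
    funext ω j
    by_cases h : j ∈ T
    · by_cases hji : j = i
      · subst hji; simp [merge, ti, h]
      · have h' : (⟨j, h⟩ : T) ≠ ti := fun e => hji (congrArg Subtype.val e)
        simp [merge, h, h', hji]
    · have hji : j ≠ i := fun e => h (e ▸ hi)
      simp [merge, h, hji]
  rw [hW]
  exact (hXY.indepFun_prodMk_right (hX i) (by fun_prop) (by fun_prop) hXYZ).comp
    measurable_id hmerge

lemma integrable_ite_le_mul_div [IsFiniteMeasure μ] {X : Ω → ℝ} {N : Ω → ℕ}
    (hX : Measurable X) (hN : Measurable N) (a : ℝ) :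
    Integrable (fun ω => (if X ω ≤ N ω * a then (1 : ℝ) else 0) / N ω) μ := by
  refine Integrable.of_bound ((Measurable.ite (measurableSet_le hX (by fun_prop)) measurable_const
    measurable_const).div (by fun_prop)).aestronglyMeasurable 1 (ae_of_all _ fun ω => ?_)
  split_ifs <;> simp [Nat.cast_inv_le_one]

lemma measureReal_restrict_Icc_Iic_le {c : ℝ} (hc : 0 ≤ c) :
    (volume.restrict (Set.Icc (0 : ℝ) 1)).real (Set.Iic c) ≤ c := by
  rw [measureReal_restrict_apply measurableSet_Iic]
  calc volume.real (Set.Iic c ∩ Set.Icc 0 1) ≤ volume.real (Set.Icc 0 c) :=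
        measureReal_mono (fun x hx => ⟨hx.2.1, hx.1⟩) measure_Icc_lt_top.ne
    _ = c := by simp [hc]

lemma integral_ite_le_mul_div_le [IsProbabilityMeasure μ] {X : Ω → ℝ} {N : Ω → ℕ}
    (hX : Measurable X) (hN : Measurable N) (hXN : IndepFun X N μ)
    (hsuper : ∀ c, 0 ≤ c → (μ.map X).real (Set.Iic c) ≤ c) {a : ℝ} (ha : 0 ≤ a) :
    ∫ ω, (if X ω ≤ N ω * a then (1 : ℝ) else 0) / N ω ∂μ ≤ a := by
  set g : ℝ × ℕ → ℝ := fun p => (if p.1 ≤ p.2 * a then (1 : ℝ) else 0) / p.2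
  have hinner (n : ℕ) : ∫ x, g (x, n) ∂(μ.map X) ≤ a := by
    have hind :
        (fun x : ℝ => if x ≤ n * a then (1 : ℝ) else 0) = (Set.Iic (n * a)).indicator 1 := by
      ext x; simp [Set.indicator_apply]
    simp only [g]
    rw [integral_div, hind, integral_indicator_one measurableSet_Iic]
    rcases n.eq_zero_or_pos with rfl | hn
    · simpa using ha
    · rw [div_le_iff₀ (by exact_mod_cast hn), mul_comm]
      exact hsuper _ (by positivity)
  have : IsProbabilityMeasure (μ.map N) := Measure.isProbabilityMeasure_map hN.aemeasurable
  calc ∫ ω, g (X ω, N ω) ∂μ = ∫ p, g p ∂(μ.map fun ω => (X ω, N ω)) :=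
        (integral_map (hX.prodMk hN).aemeasurable
          (integrable_ite_le_mul_div measurable_fst measurable_snd a).aestronglyMeasurable).symm
    _ = ∫ p, g p ∂((μ.map X).prod (μ.map N)) := by
        rw [hXN.map_prod_eq_prod_map_map hX.aemeasurable hN.aemeasurable]
    _ = ∫ n, ∫ x, g (x, n) ∂(μ.map X) ∂(μ.map N) :=
        integral_prod_symm g (integrable_ite_le_mul_div measurable_fst measurable_snd a)
    _ ≤ ∫ _, a ∂(μ.map N) :=
        integral_mono_of_nonneg (ae_of_all _ fun n => integral_nonneg fun x => by positivity)
          (integrable_const a) (ae_of_all _ hinner)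
    _ = a := by simp

end ProbabilityTheory

theorem benjamini_hochberg_fdr_control_general {Ω : Type*} [MeasureSpace Ω]
    [IsProbabilityMeasure (ℙ : Measure Ω)] (m m₀ : ℕ)
    (q : ℝ) (hq : 0 ≤ q)
    (pv : Fin m → Ω → ℝ) (hmeas : ∀ i, Measurable (pv i))
    (T : Finset (Fin m)) (hT : T.card = m₀)
    (hUnif : ∀ i ∈ T, Measure.map (pv i) ℙ = volume.restrict (Set.Icc (0 : ℝ) 1))
    (hnullIndep : iIndepFun (fun i : T => pv (i : Fin m)) ℙ)
    (hcross : IndepFun (fun ω => fun i : T => pv (i : Fin m) ω)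
      (fun ω => fun j : {j : Fin m // j ∉ T} => pv (j : Fin m) ω) ℙ) :
    (∫ ω, ((T.filter
        (fun i => pv i ω ≤ (bhNumRejections m q (fun i => pv i ω) : ℝ) * q / m)).card : ℝ) /
        max (bhNumRejections m q (fun i => pv i ω) : ℝ) 1 ∂ℙ) ≤ (m₀ / m : ℝ) * q ∧
      (m₀ / m : ℝ) * q ≤ q := by
  have hm₀ : (m₀ : ℝ) ≤ m := by
    rw [← hT]
    exact_mod_cast (card_le_univ T).trans_eq (Fintype.card_fin m)
  refine ⟨?_, mul_le_of_le_one_left hq (div_le_one_of_le₀ hm₀ m.cast_nonneg)⟩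
  set R : Fin m → Ω → ℕ := fun i ω =>
    bhNumRejections m q (Function.update (fun j => pv j ω) i 0)
  have hR (i : Fin m) : Measurable (R i) :=
    (measurable_bhNumRejections (m := m) (q := q)).comp (by fun_prop)
  have hbound (i : Fin m) (hi : i ∈ T) :
      ∫ ω, (if pv i ω ≤ R i ω * (q / m) then (1 : ℝ) else 0) / R i ω ≤ q / m := by
    have hindep : IndepFun (pv i) (R i) ℙ :=
      (indepFun_update_of_iIndepFun hmeas hnullIndep hcross hi 0).comp measurable_id
        measurable_bhNumRejections
    have hsuper (c : ℝ) (hc : 0 ≤ c) : ((ℙ : Measure Ω).map (pv i)).real (Set.Iic c) ≤ c := by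
      rw [hUnif i hi]
      exact measureReal_restrict_Icc_Iic_le hc
    exact integral_ite_le_mul_div_le (hmeas i) (hR i) hindep hsuper (by positivity)
  calc _ = ∑ i ∈ T, ∫ ω, (if pv i ω ≤ R i ω * (q / m) then (1 : ℝ) else 0) / R i ω := by
        rw [integral_congr_ae (ae_of_all _ fun ω =>
            card_filter_div_max_bhNumRejections_eq_sum hq (fun j => pv j ω) T),
          integral_finsetSum _ fun i _ => integrable_ite_le_mul_div (hmeas i) (hR i) _]
    _ ≤ ∑ _i ∈ T, q / m := sum_le_sum hbound
    _ = m₀ / m * q := by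
        rw [sum_const, hT, nsmul_eq_mul]
        ring

/-- Benjamini–Hochberg (1995): under independence, the step-up procedure controls
the false discovery rate at level `(m₀/m)·q ≤ q`. -/
theorem benjamini_hochberg_fdr_control {Ω : Type*} [MeasureSpace Ω]
    [IsProbabilityMeasure (ℙ : Measure Ω)] (m m₀ : ℕ) (hm : 0 < m)
    (q : ℝ) (hq : 0 ≤ q) (hq1 : q ≤ 1)
    (pv : Fin m → Ω → ℝ) (hmeas : ∀ i, Measurable (pv i))
    (T : Finset (Fin m)) (hT : T.card = m₀)
    (hUnif : ∀ i ∈ T, Measure.map (pv i) ℙ = volume.restrict (Set.Icc (0 : ℝ) 1))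
    (hnullIndep : iIndepFun (fun i : T => pv (i : Fin m)) ℙ)
    (hcross : IndepFun (fun ω => fun i : T => pv (i : Fin m) ω)
      (fun ω => fun j : {j : Fin m // j ∉ T} => pv (j : Fin m) ω) ℙ) :
    (∫ ω, ((T.filter
        (fun i => pv i ω ≤ (bhNumRejections m q (fun i => pv i ω) : ℝ) * q / m)).card : ℝ) /
        max (bhNumRejections m q (fun i => pv i ω) : ℝ) 1 ∂ℙ) ≤ (m₀ / m : ℝ) * q ∧
      (m₀ / m : ℝ) * q ≤ q :=
  benjamini_hochberg_fdr_control_general m m₀ q hq pv hmeas T hT hUnif hnullIndep hcross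
end
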